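/- Confidentiality as an instance of well-propagation: Under the hypotheses of the abstract well-propagation theorem, instantiate 𝔇 = {secret, public} and the policy 𝔓(d,ℓ₁,ℓ₂) ⇔ d = public. If the analysis is valid for N and every abstract value occurring in any κ(ℓ₂) message is tagged public by 𝔗_S, then N has no leaks: no reduct of N can send a message containing a value whose abstract tree is tagged secret by 𝔗_D. -/

import Mathlib

inductive Tag where
  | secret
  | public'
deriving DecidableEq

/-!
Validity is invariant along reductions, so every communication of a reduct of `N` is covered
by a `κ` message. As `TD` and `TS` agree on an abstract value and the trees of its languages,
each value sent carries the tag of an abstract value of that message, which is public.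
-/

open Relation

section WellPropagation

variable {Sys L V T G D : Type*} {Step : Sys → Sys → Prop}
  {Comm : Sys → L → L → List V → Sys → Prop} {tree : V → T} {Lang : G → Set T}
  {κ : L → Set (L × List (Set G))} {Valid : Sys → Prop} {TD : T → D} {TS : Set G → D}

theorem valid_of_reflTransGen (hSR : ∀ N N', Valid N → Step N N' → Valid N')
    {N N' : Sys} (hN : Valid N) (hsteps : ReflTransGen Step N N') : Valid N' := by
  induction hsteps with
  | refl => exact hN
  | tail _ hstep ih => exact hSR _ _ ih hstep

theorem exists_tag_eq_of_comm
    (hComm : ∀ N ℓ₁ ℓ₂ (vs : List V) N', Valid N → Comm N ℓ₁ ℓ₂ vs N' →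
      ∃ avs : List (Set G), (ℓ₁, avs) ∈ κ ℓ₂ ∧ avs.length = vs.length ∧
        ∀ i (hv : i < vs.length) (ha : i < avs.length),
          ∃ Gh ∈ avs.get ⟨i, ha⟩, tree (vs.get ⟨i, hv⟩) ∈ Lang Gh)
    (hTag : ∀ av : Set G, ∀ g ∈ av, ∀ t ∈ Lang g, TD t = TS av)
    {N N' : Sys} {ℓ₁ ℓ₂ : L} {vs : List V} (hN : Valid N) (hcomm : Comm N ℓ₁ ℓ₂ vs N')
    (i : ℕ) (hv : i < vs.length) :
    ∃ avs, (ℓ₁, avs) ∈ κ ℓ₂ ∧ ∃ av ∈ avs, TD (tree (vs.get ⟨i, hv⟩)) = TS av := by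
  obtain ⟨avs, hmem, hlen, hlang⟩ := hComm N ℓ₁ ℓ₂ vs N' hN hcomm
  have ha : i < avs.length := hlen ▸ hv
  obtain ⟨g, hg, ht⟩ := hlang i hv ha
  exact ⟨avs, hmem, avs.get ⟨i, ha⟩, avs.get_mem _, hTag _ g hg _ ht⟩

theorem well_propagation (P : D → L → L → Prop)
    (hSR : ∀ N N', Valid N → Step N N' → Valid N')
    (hComm : ∀ N ℓ₁ ℓ₂ (vs : List V) N', Valid N → Comm N ℓ₁ ℓ₂ vs N' →
      ∃ avs : List (Set G), (ℓ₁, avs) ∈ κ ℓ₂ ∧ avs.length = vs.length ∧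
        ∀ i (hv : i < vs.length) (ha : i < avs.length),
          ∃ Gh ∈ avs.get ⟨i, ha⟩, tree (vs.get ⟨i, hv⟩) ∈ Lang Gh)
    (hTag : ∀ av : Set G, ∀ g ∈ av, ∀ t ∈ Lang g, TD t = TS av)
    (hκ : ∀ ℓ₁ ℓ₂ (avs : List (Set G)), (ℓ₁, avs) ∈ κ ℓ₂ → ∀ av ∈ avs, P (TS av) ℓ₁ ℓ₂)
    {N N' N'' : Sys} {ℓ₁ ℓ₂ : L} {vs : List V} (hN : Valid N)
    (hsteps : ReflTransGen Step N N') (hcomm : Comm N' ℓ₁ ℓ₂ vs N'')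
    (i : ℕ) (hv : i < vs.length) :
    P (TD (tree (vs.get ⟨i, hv⟩))) ℓ₁ ℓ₂ := by
  obtain ⟨avs, hmem, av, hav, htag⟩ :=
    exists_tag_eq_of_comm hComm hTag (valid_of_reflTransGen hSR hN hsteps) hcomm i hv
  exact htag ▸ hκ ℓ₁ ℓ₂ avs hmem av hav

end WellPropagation

/-- Confidentiality as an instance of well-propagation: with tags
`{secret, public}` and policy `d = public`, if the analysis is valid for `N` and
every abstract value occurring in any `κ` message is tagged `public` by `TS`,
then no reduct of `N` can send a message containing a value whose abstract tree
is tagged `secret` by `TD`. -/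
theorem confidentiality_no_leaks
    {Sys L V T G : Type*}
    (Step : Sys → Sys → Prop)
    (Comm : Sys → L → L → List V → Sys → Prop)
    (tree : V → T)
    (Lang : G → Set T)
    (κ : L → Set (L × List (Set G)))
    (Valid : Sys → Prop)
    (hSR : ∀ N N', Valid N → Step N N' → Valid N')
    (hComm : ∀ N ℓ₁ ℓ₂ (vs : List V) N', Valid N → Comm N ℓ₁ ℓ₂ vs N' →
      ∃ avs : List (Set G), (ℓ₁, avs) ∈ κ ℓ₂ ∧ avs.length = vs.length ∧
        ∀ i (hv : i < vs.length) (ha : i < avs.length),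
          ∃ Gh ∈ avs.get ⟨i, ha⟩, tree (vs.get ⟨i, hv⟩) ∈ Lang Gh)
    (TD : T → Tag) (TS : Set G → Tag)
    (hTag : ∀ av : Set G, ∀ g ∈ av, ∀ t ∈ Lang g, TD t = TS av)
    (N : Sys) (hValid : Valid N)
    -- every abstract value occurring in any κ message is tagged public
    (hκ : ∀ ℓ₁ ℓ₂ (avs : List (Set G)), (ℓ₁, avs) ∈ κ ℓ₂ →
      ∀ av ∈ avs, TS av = Tag.public') :
    -- no leaks
    ∀ N', Relation.ReflTransGen Step N N' →
      ∀ ℓ₁ ℓ₂ (vs : List V) N'', Comm N' ℓ₁ ℓ₂ vs N'' →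
        ∀ i (hv : i < vs.length), TD (tree (vs.get ⟨i, hv⟩)) ≠ Tag.secret := by
  intro N' hsteps ℓ₁ ℓ₂ vs N'' hcomm i hv
  have hpublic : TD (tree (vs.get ⟨i, hv⟩)) = Tag.public' :=
    well_propagation (fun d _ _ => d = Tag.public') hSR hComm hTag hκ hValid hsteps hcomm i hv
  rw [hpublic]
  decide
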